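/- arXiv:1502.04436 — 6 statements merged into one kernel-verified Lean document; each statement's English description precedes it below -/
import Mathlib

section
/- For all positive integers k ≠ l and all integers a and b, the Laurent polynomials f_k(t^a) and f_l(t^b) are relatively prime in ℤ[t^{±1}], that is, every common divisor of f_k(t^a) and f_l(t^b) in the Laurent polynomial ring ℤ[t^{±1}] is a unit. -/
/-!
For `a, b > 0`, eliminating `t` between a linear factor of `f_k(t^a)` and one of `f_l(t^b)` (via
`(t^a)^b = (t^b)^a`) leaves, up to sign, `k^b (l+1)^a - (k+1)^b l^a` or
`k^b l^a - (k+1)^b (l+1)^a`, so a common divisor `d` of the two products divides the product of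
these four integers. The second kind is nonzero by size. If the first vanished, coprimality of
consecutive integers would force `k^b = l^a` and `(k+1)^b = (l+1)^a`; for `k < l` this gives
`b > a` and then `((k+1) l)^b < (k (l+1))^b`, i.e. `l < k`. Hence `d` divides a nonzero constant,
so it is a monomial `c t^n`, and evaluating at `t = 1`, where `f_k(1) = -1`, gives `c = ±1`.
Negative exponents reduce to positive ones because `f_k` is palindromic, and `f_k(t^0) = -1`.
-/

open LaurentPolynomial

theorem Nat.pow_eq_pow_and_succ_pow_eq_succ_pow_of_mul_eq {k l p q : ℕ}
    (h : k ^ p * (l + 1) ^ q = (k + 1) ^ p * l ^ q) :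
    k ^ p = l ^ q ∧ (k + 1) ^ p = (l + 1) ^ q := by
  have hk : (k ^ p).Coprime ((k + 1) ^ p) :=
    (Nat.coprime_self_add_right.mpr k.coprime_one_right).pow p p
  have hl : (l ^ q).Coprime ((l + 1) ^ q) :=
    (Nat.coprime_self_add_right.mpr l.coprime_one_right).pow q q
  exact ⟨Nat.dvd_antisymm (hk.dvd_of_dvd_mul_left (h ▸ dvd_mul_right _ _))
      (hl.dvd_of_dvd_mul_right (h ▸ dvd_mul_left _ _)),
    Nat.dvd_antisymm (hk.symm.dvd_of_dvd_mul_left (h ▸ dvd_mul_right _ _))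
      (hl.symm.dvd_of_dvd_mul_right (h ▸ dvd_mul_left _ _))⟩

theorem Nat.eq_of_pow_eq_pow_of_succ_pow_eq_succ_pow {k l p q : ℕ} (hp : p ≠ 0) (hq : q ≠ 0)
    (h : k ^ p = l ^ q) (hsucc : (k + 1) ^ p = (l + 1) ^ q) : k = l := by
  by_contra hkl
  wlog hlt : k < l generalizing k l p q
  · exact this hq hp h.symm hsucc.symm (Ne.symm hkl) (by omega)
  have hk : 2 ≤ k := by
    by_contra! hk
    have hl : l ≤ k ^ p := h ▸ Nat.le_self_pow hq l
    interval_cases k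
    · simp [hp] at hl; omega
    · simp at hl; omega
  have hqp : q < p := (Nat.pow_lt_pow_iff_right hk).mp <| by
    calc k ^ q < l ^ q := Nat.pow_lt_pow_left hlt hq
      _ = k ^ p := h.symm
  obtain ⟨r, rfl⟩ := Nat.exists_eq_add_of_lt hqp
  have : ((k + 1) * l) ^ (q + r + 1) < (k * (l + 1)) ^ (q + r + 1) := by
    calc ((k + 1) * l) ^ (q + r + 1) = (l + 1) ^ q * l ^ q * l ^ (r + 1) := by
          rw [mul_pow, hsucc]; ring
      _ < (l + 1) ^ q * l ^ q * (l + 1) ^ (r + 1) := by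
          gcongr
          · have : 0 < l := by omega
            positivity
          · omega
      _ = (k * (l + 1)) ^ (q + r + 1) := by rw [mul_pow k, h]; ring
  have := (Nat.pow_lt_pow_iff_left (by omega)).mp this
  nlinarith

theorem Nat.pow_mul_succ_pow_ne_succ_pow_mul_pow {k l p q : ℕ} (hkl : k ≠ l) (hp : p ≠ 0)
    (hq : q ≠ 0) : k ^ p * (l + 1) ^ q ≠ (k + 1) ^ p * l ^ q := fun h ↦
  have ⟨h₁, h₂⟩ := Nat.pow_eq_pow_and_succ_pow_eq_succ_pow_of_mul_eq h
  hkl (Nat.eq_of_pow_eq_pow_of_succ_pow_eq_succ_pow hp hq h₁ h₂)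

section Elimination

variable {R : Type*} [CommRing R]

theorem sub_mem_span_pair_of_pow_eq {y z : R} {p q : ℕ} (hy : IsUnit y) (h : y ^ p = z ^ q)
    (u v w x : R) : u ^ p * x ^ q - v ^ p * w ^ q ∈ Ideal.span {u * y - v, w * z - x} := by
  rw [← Ideal.mul_unit_mem_iff_mem _ (hy.pow p), Ideal.mem_span_pair]
  obtain ⟨f, hf⟩ := sub_dvd_pow_sub_pow (u * y) v p
  obtain ⟨g, hg⟩ := sub_dvd_pow_sub_pow (w * z) x q
  exact ⟨x ^ q * f, -(v ^ p * g),
    by linear_combination -x ^ q * hf + v ^ p * hg + v ^ p * w ^ q * h⟩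

theorem mul_mul_mul_eq_zero_of_mem_span_pair {a₁ a₂ b₁ b₂ c₁₁ c₁₂ c₂₁ c₂₂ : R}
    (ha : a₁ * a₂ = 0) (hb : b₁ * b₂ = 0) (h₁₁ : c₁₁ ∈ Ideal.span {a₁, b₁})
    (h₁₂ : c₁₂ ∈ Ideal.span {a₁, b₂}) (h₂₁ : c₂₁ ∈ Ideal.span {a₂, b₁})
    (h₂₂ : c₂₂ ∈ Ideal.span {a₂, b₂}) : c₁₁ * c₂₂ * (c₁₂ * c₂₁) = 0 := by
  obtain ⟨x₁, y₁, rfl⟩ := Ideal.mem_span_pair.mp h₁₁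
  obtain ⟨x₂, y₂, rfl⟩ := Ideal.mem_span_pair.mp h₂₂
  obtain ⟨x₃, y₃, rfl⟩ := Ideal.mem_span_pair.mp h₁₂
  obtain ⟨x₄, y₄, rfl⟩ := Ideal.mem_span_pair.mp h₂₁
  have hP : (x₁ * a₁ + y₁ * b₁) * (x₂ * a₂ + y₂ * b₂) =
      a₁ * b₂ * (x₁ * y₂) + a₂ * b₁ * (x₂ * y₁) := by
    linear_combination x₁ * x₂ * ha + y₁ * y₂ * hb
  have hQ : (x₃ * a₁ + y₃ * b₂) * (x₄ * a₂ + y₄ * b₁) =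
      a₁ * b₁ * (x₃ * y₄) + a₂ * b₂ * (x₄ * y₃) := by
    linear_combination x₃ * x₄ * ha + y₃ * y₄ * hb
  rw [hP, hQ]
  linear_combination (b₂ * b₂ * (x₁ * y₂) * (x₄ * y₃) + b₁ * b₁ * (x₂ * y₁) * (x₃ * y₄)) * ha +
    (a₁ * a₁ * (x₁ * y₂) * (x₃ * y₄) + a₂ * a₂ * (x₂ * y₁) * (x₄ * y₃)) * hb

theorem dvd_mul_mul_mul_of_mem_span_pair {d a₁ a₂ b₁ b₂ c₁₁ c₁₂ c₂₁ c₂₂ : R}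
    (ha : d ∣ a₁ * a₂) (hb : d ∣ b₁ * b₂) (h₁₁ : c₁₁ ∈ Ideal.span {a₁, b₁})
    (h₁₂ : c₁₂ ∈ Ideal.span {a₁, b₂}) (h₂₁ : c₂₁ ∈ Ideal.span {a₂, b₁})
    (h₂₂ : c₂₂ ∈ Ideal.span {a₂, b₂}) : d ∣ c₁₁ * c₂₂ * (c₁₂ * c₂₁) := by
  let π := Ideal.Quotient.mk (Ideal.span {d})
  have hπ : ∀ {x}, d ∣ x ↔ π x = 0 := by
    simp [π, Ideal.Quotient.eq_zero_iff_mem, Ideal.mem_span_singleton]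
  have hspan : ∀ {x a b}, x ∈ Ideal.span {a, b} → π x ∈ Ideal.span {π a, π b} := fun hx ↦ by
    simpa [Ideal.map_span, Set.image_pair] using Ideal.mem_map_of_mem π hx
  rw [hπ, map_mul, map_mul, map_mul]
  exact mul_mul_mul_eq_zero_of_mem_span_pair (by rw [← map_mul, ← hπ]; exact ha)
    (by rw [← map_mul, ← hπ]; exact hb) (hspan h₁₁) (hspan h₁₂) (hspan h₂₁) (hspan h₂₂)

end Elimination

namespace Polynomial

variable {R : Type*} [Semiring R]

theorem eq_C_mul_X_pow_of_natTrailingDegree_eq_natDegree {p : R[X]}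
    (h : p.natTrailingDegree = p.natDegree) : p = C p.leadingCoeff * X ^ p.natDegree := by
  ext n
  rw [coeff_C_mul_X_pow]
  obtain hn | rfl | hn := lt_trichotomy n p.natDegree
  · rw [if_neg hn.ne, coeff_eq_zero_of_lt_natTrailingDegree (h ▸ hn)]
  · rw [if_pos rfl, leadingCoeff]
  · rw [if_neg hn.ne', coeff_eq_zero_of_natDegree_lt hn]

theorem exists_eq_C_mul_X_pow_of_dvd_C_mul_X_pow [NoZeroDivisors R] {p : R[X]} {c : R}
    (hc : c ≠ 0) {n : ℕ} (h : p ∣ C c * X ^ n) : ∃ a m, p = C a * X ^ m := by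
  obtain ⟨q, hq⟩ := h
  rw [C_mul_X_pow_eq_monomial] at hq
  have hcn : monomial n c ≠ 0 := by simpa using hc
  have hp : p ≠ 0 := left_ne_zero_of_mul (hq ▸ hcn)
  have hq0 : q ≠ 0 := right_ne_zero_of_mul (hq ▸ hcn)
  have hdeg := congrArg natDegree hq
  have htrail := congrArg natTrailingDegree hq
  rw [natDegree_monomial_eq n hc, natDegree_mul hp hq0] at hdeg
  rw [natTrailingDegree_monomial hc, natTrailingDegree_mul hp hq0] at htrail
  have := p.natTrailingDegree_le_natDegree
  have := q.natTrailingDegree_le_natDegree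
  exact ⟨_, _, eq_C_mul_X_pow_of_natTrailingDegree_eq_natDegree (by omega)⟩

end Polynomial

theorem LaurentPolynomial.exists_eq_C_mul_T_of_dvd_C {R : Type*} [CommSemiring R]
    [NoZeroDivisors R] {d : R[T;T⁻¹]} {c : R} (hc : c ≠ 0) (h : d ∣ C c) :
    ∃ a n, d = C a * T n := by
  obtain ⟨e, he⟩ := h
  obtain ⟨m, d₀, hd₀⟩ := exists_T_pow d
  obtain ⟨m', e₀, he₀⟩ := exists_T_pow e
  have : d₀ ∣ Polynomial.C c * Polynomial.X ^ (m + m') := by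
    refine ⟨e₀, Polynomial.toLaurent_injective ?_⟩
    simp only [map_mul, hd₀, he₀, Polynomial.toLaurent_C, Polynomial.toLaurent_X_pow, he,
      Nat.cast_add, T_add]
    ring
  obtain ⟨a, j, rfl⟩ := Polynomial.exists_eq_C_mul_X_pow_of_dvd_C_mul_X_pow hc this
  refine ⟨a, j - m, ?_⟩
  simp only [map_mul, Polynomial.toLaurent_C, Polynomial.toLaurent_X_pow] at hd₀
  rw [sub_eq_add_neg, ← mul_T_assoc, hd₀, mul_T_assoc, add_neg_cancel, T_zero, mul_one]

/-- `fk k a` is `f_k(t^a)`. -/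
noncomputable def fk (k a : ℤ) : LaurentPolynomial ℤ :=
  (C k * T a - C (k + 1)) * (C (k + 1) * T a - C k)

theorem isUnit_fk_zero (k : ℤ) : IsUnit (fk k 0) := by
  simp only [fk, T_zero, mul_one, ← map_sub, ← map_mul]
  simp

theorem fk_neg (k a : ℤ) : fk k (-a) = T (-(2 * a)) * fk k a := by
  have hinv : (T a : LaurentPolynomial ℤ) * T (-a) = 1 := by rw [← T_add, add_neg_cancel, T_zero]
  have hsq : (T (-(2 * a)) : LaurentPolynomial ℤ) = T (-a) * T (-a) := by rw [← T_add]; ring_nf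
  rw [fk, fk, hsq]
  linear_combination
    ((C k ^ 2 + C (k + 1) ^ 2) * T (-a) - C k * C (k + 1) * (1 + T a * T (-a))) * hinv

theorem dvd_fk_natAbs {d : LaurentPolynomial ℤ} {k a : ℤ} (h : d ∣ fk k a) :
    d ∣ fk k a.natAbs := by
  rcases Int.natAbs_eq a with ha | ha
  · rwa [← ha]
  · rwa [ha, fk_neg, (isUnit_T _).dvd_mul_left] at h

theorem eval₂_one_fk (k a : ℤ) : eval₂ (RingHom.id ℤ) 1 (fk k a) = -1 := by
  simp [fk]

theorem isUnit_of_dvd_fk_of_dvd_fk {k l : ℕ} (hkl : k ≠ l) {a b : ℕ} (ha : a ≠ 0) (hb : b ≠ 0)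
    {d : LaurentPolynomial ℤ} (hdk : d ∣ fk k a) (hdl : d ∣ fk l b) : IsUnit d := by
  have hT : IsUnit (T a : LaurentPolynomial ℤ) := isUnit_T _
  have hab : (T a : LaurentPolynomial ℤ) ^ b = T b ^ a := by rw [T_pow, T_pow, mul_comm]
  have hdM := dvd_mul_mul_mul_of_mem_span_pair hdk hdl
    (sub_mem_span_pair_of_pow_eq hT hab _ _ _ _) (sub_mem_span_pair_of_pow_eq hT hab _ _ _ _)
    (sub_mem_span_pair_of_pow_eq hT hab _ _ _ _) (sub_mem_span_pair_of_pow_eq hT hab _ _ _ _)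
  simp only [← map_pow, ← map_mul, ← map_sub] at hdM
  have h₁ := Nat.pow_mul_succ_pow_ne_succ_pow_mul_pow hkl hb ha
  have h₂ : k ^ b * l ^ a ≠ (k + 1) ^ b * (l + 1) ^ a :=
    (Nat.mul_lt_mul_of_lt_of_le (Nat.pow_lt_pow_left k.lt_add_one hb)
      (Nat.pow_le_pow_left (Nat.le_succ l) a) (by positivity)).ne
  obtain ⟨c, n, rfl⟩ := exists_eq_C_mul_T_of_dvd_C
    (mul_ne_zero
      (mul_ne_zero (sub_ne_zero.mpr (mod_cast h₁)) (sub_ne_zero.mpr (mod_cast h₁.symm)))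
      (mul_ne_zero (sub_ne_zero.mpr (mod_cast h₂)) (sub_ne_zero.mpr (mod_cast h₂.symm)))) hdM
  have hc : c ∣ -1 := by
    simpa [← eval₂_one_fk k a] using map_dvd (eval₂ (RingHom.id ℤ) 1) hdk
  exact (isUnit_of_dvd_unit hc isUnit_one.neg |>.map C).mul (isUnit_T n)

theorem fk_pairwise_strongly_coprime_general (k l : ℕ) (hkl : k ≠ l)
    (a b : ℤ) (d : LaurentPolynomial ℤ)
    (hdk : d ∣ (C (k : ℤ) * T a - C ((k : ℤ) + 1)) * (C ((k : ℤ) + 1) * T a - C (k : ℤ)))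
    (hdl : d ∣ (C (l : ℤ) * T b - C ((l : ℤ) + 1)) * (C ((l : ℤ) + 1) * T b - C (l : ℤ))) :
    IsUnit d := by
  have hk : d ∣ fk k a.natAbs := dvd_fk_natAbs hdk
  have hl : d ∣ fk l b.natAbs := dvd_fk_natAbs hdl
  rcases eq_or_ne a.natAbs 0 with ha | ha
  · exact isUnit_of_dvd_unit (by simpa [ha] using hk) (isUnit_fk_zero k)
  rcases eq_or_ne b.natAbs 0 with hb | hb
  · exact isUnit_of_dvd_unit (by simpa [hb] using hl) (isUnit_fk_zero l)
  exact isUnit_of_dvd_fk_of_dvd_fk hkl ha hb hk hl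

/-- For positive integers `k ≠ l` and all integers `a`, `b`, the Laurent polynomials
`f_k(t^a)` and `f_l(t^b)` are relatively prime in `ℤ[t^{±1}]`, where
`f_k(t) = (kt − (k+1))((k+1)t − k)`: every common divisor is a unit. -/
theorem fk_pairwise_strongly_coprime (k l : ℕ) (hk : 0 < k) (hl : 0 < l) (hkl : k ≠ l)
    (a b : ℤ) (d : LaurentPolynomial ℤ)
    (hdk : d ∣ (C (k : ℤ) * T a - C ((k : ℤ) + 1)) * (C ((k : ℤ) + 1) * T a - C (k : ℤ)))
    (hdl : d ∣ (C (l : ℤ) * T b - C ((l : ℤ) + 1)) * (C ((l : ℤ) + 1) * T b - C (l : ℤ))) :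
    IsUnit d :=
  fk_pairwise_strongly_coprime_general k l hkl a b d hdk hdl
end

section
/- For all positive integers k ≠ l and all integers a, b: if ((k+1)/k)^a = ((l+1)/l)^b holds in ℚ, then a = 0 and b = 0. -/
/-! Both bases exceed `1`, so the exponents have the same sign and may be taken in `ℕ`.
Comparing denominators of the reduced fractions gives `k ^ m = l ^ n`; for `k < l` this forces
`n ≤ m`, while `(l + 1) / l < (k + 1) / k` forces `m ≤ n`. Hence `m = n`, and `k ^ n = l ^ n`
with `k ≠ l` leaves `n = 0`. -/

theorem pow_natAbs_eq_pow_natAbs_of_zpow_eq {G₀ : Type*} [GroupWithZero G₀] [PartialOrder G₀]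
    [PosMulReflectLT G₀] [ZeroLEOneClass G₀] {x y : G₀} (hx : 1 < x) (hy : 1 < y) {a b : ℤ}
    (h : x ^ a = y ^ b) : x ^ a.natAbs = y ^ b.natAbs := by
  rw [← zpow_natCast, ← zpow_natCast]
  rcases le_total 0 a with ha | ha
  · have hb : 0 ≤ b := by rwa [← one_le_zpow_iff_right₀ hy, ← h, one_le_zpow_iff_right₀ hx]
    rwa [Int.natAbs_of_nonneg ha, Int.natAbs_of_nonneg hb]
  · have hb : b ≤ 0 := by rwa [← zpow_le_one_iff_right₀ hy, ← h, zpow_le_one_iff_right₀ hx]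
    rw [Int.ofNat_natAbs_of_nonpos ha, Int.ofNat_natAbs_of_nonpos hb, zpow_neg, zpow_neg, h]

section AddOneDivSelf

variable {K : Type*} [Field K] [LinearOrder K] [IsStrictOrderedRing K] {k l : ℕ}

theorem one_lt_add_one_div_self (hk : 0 < k) : 1 < ((k : K) + 1) / k := by
  rw [lt_div_iff₀ (Nat.cast_pos.2 hk)]
  linarith

theorem add_one_div_self_lt_add_one_div_self (hk : 0 < k) (hkl : k < l) :
    ((l : K) + 1) / l < ((k : K) + 1) / k := by
  have hkl' : (k : K) < l := by exact_mod_cast hkl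
  rw [div_lt_div_iff₀ (Nat.cast_pos.2 (hk.trans hkl)) (Nat.cast_pos.2 hk)]
  linarith

end AddOneDivSelf

theorem Rat.den_add_one_div_self {k : ℕ} (hk : 0 < k) : (((k : ℚ) + 1) / k).den = k := by
  have h := Rat.den_div_eq_of_coprime (a := (k : ℤ) + 1) (b := k) (by omega)
    (by simp [Int.natAbs_add_of_nonneg])
  push_cast at h
  exact_mod_cast h

theorem eq_zero_of_add_one_div_self_pow_eq_pow {k l m n : ℕ} (hk : 0 < k) (hl : 0 < l) (hkl : k ≠ l)
    (h : (((k : ℚ) + 1) / k) ^ m = (((l : ℚ) + 1) / l) ^ n) : m = 0 ∧ n = 0 := by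
  wlog hlt : k < l generalizing k l m n
  · exact (this hl hk hkl.symm h.symm (by omega)).symm
  have hden : k ^ m = l ^ n := by
    simpa only [Rat.den_pow, Rat.den_add_one_div_self hk, Rat.den_add_one_div_self hl]
      using congrArg Rat.den h
  have hmn : m ≤ n := by
    rw [← pow_le_pow_iff_right₀ (one_lt_add_one_div_self (K := ℚ) hk), h]
    exact pow_le_pow_left₀ (by positivity) (add_one_div_self_lt_add_one_div_self hk hlt).le n
  obtain rfl : m = n := by
    refine le_antisymm hmn (not_lt.1 fun hnm => ?_)
    refine lt_irrefl (l ^ n) ?_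
    calc l ^ n = k ^ m := hden.symm
      _ ≤ k ^ n := Nat.pow_le_pow_right hk hnm.le
      _ < l ^ n := Nat.pow_lt_pow_left hlt (by omega)
  have hm : m = 0 := by
    by_contra hm
    exact hkl (Nat.pow_left_injective hm hden)
  exact ⟨hm, hm⟩

/-- For positive integers `k ≠ l` and integers `a`, `b`: if
`((k+1)/k)^a = ((l+1)/l)^b` in `ℚ`, then `a = 0` and `b = 0`. -/
theorem multiplicative_independence (k l : ℕ) (hk : 0 < k) (hl : 0 < l) (hkl : k ≠ l)
    (a b : ℤ) (h : (((k : ℚ) + 1) / (k : ℚ)) ^ a = (((l : ℚ) + 1) / (l : ℚ)) ^ b) :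
    a = 0 ∧ b = 0 := by
  have h' := pow_natAbs_eq_pow_natAbs_of_zpow_eq (one_lt_add_one_div_self hk)
    (one_lt_add_one_div_self hl) h
  obtain ⟨ha, hb⟩ := eq_zero_of_add_one_div_self_pow_eq_pow hk hl hkl h'
  exact ⟨Int.natAbs_eq_zero.1 ha, Int.natAbs_eq_zero.1 hb⟩
end

section
/- Let R be a commutative ring, G a group, and A a normal subgroup of G such that the group ring R[A] is a domain (nonzero with no zero divisors). Regard R[A] as a subring of R[G]. Let S₀ be a multiplicatively closed subset of R[A] with 0 ∉ S₀ which is a right divisor set of R[A] (for every a ∈ R[A] and s ∈ S₀ there exist a' ∈ R[A] and s' ∈ S₀ with a·s' = s·a') and which is G-invariant, i.e., g⁻¹S₀g = S₀ for every g ∈ G, where g also denotes the corresponding group-ring element and conjugation is taken inside R[G] (conjugation by g preserves R[A] because A is normal). Then S₀ is a right divisor set of R[G]: 0 ∉ S₀ and for every a ∈ R[G] and s ∈ S₀ there exist a' ∈ R[G] and s' ∈ S₀ with a·s' = s·a'. -/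
/-!
The elements `a ∈ R[G]` with `a S₀ ∩ s R[G] ≠ ∅` for all `s ∈ S₀` contain `1` and are closed
under right multiplication by `R[A]` (by the Ore condition in `R[A]`), under addition (solve for
the first summand, then for the second summand times the resulting `s'`), under scalars, and under
left multiplication by each `g ∈ G` (because `g⁻¹ S₀ g = S₀`). Since `R[G]` is spanned over `R`
by `G`, that is all of `R[G]`.
-/

open MonoidAlgebra

section RightOreCondition

variable {S T : Type*} [Ring S] [Ring T] (ι : S →+* T) (S₀ : Set S)

def RightOreCondition (a : T) : Prop :=
  ∀ s ∈ S₀, ∃ a' : T, ∃ s' ∈ S₀, a * ι s' = ι s * a'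

variable {ι S₀}

theorem rightOreCondition_one : RightOreCondition ι S₀ 1 :=
  fun s hs => ⟨1, s, hs, by rw [one_mul, mul_one]⟩

theorem RightOreCondition.mul_map
    (hdiv : ∀ a : S, ∀ s ∈ S₀, ∃ a' : S, ∃ s' ∈ S₀, a * s' = s * a')
    {a : T} (ha : RightOreCondition ι S₀ a) (x : S) : RightOreCondition ι S₀ (a * ι x) := by
  intro s hs
  obtain ⟨b, t, ht, hab⟩ := ha s hs
  obtain ⟨x', t', ht', hxt⟩ := hdiv x t ht
  refine ⟨b * ι x', t', ht', ?_⟩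
  calc a * ι x * ι t' = a * ι t * ι x' := by rw [mul_assoc, ← map_mul, hxt, map_mul, ← mul_assoc]
    _ = ι s * (b * ι x') := by rw [hab, mul_assoc]

theorem RightOreCondition.add
    (hmul : ∀ s ∈ S₀, ∀ t ∈ S₀, s * t ∈ S₀)
    (hdiv : ∀ a : S, ∀ s ∈ S₀, ∃ a' : S, ∃ s' ∈ S₀, a * s' = s * a')
    {a b : T} (ha : RightOreCondition ι S₀ a) (hb : RightOreCondition ι S₀ b) :
    RightOreCondition ι S₀ (a + b) := by
  intro s hs
  obtain ⟨a', t, ht, hat⟩ := ha s hs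
  obtain ⟨b', t', ht', hbt⟩ := hb.mul_map hdiv t s hs
  refine ⟨a' * ι t' + b', t * t', hmul t ht t' ht', ?_⟩
  rw [map_mul, add_mul, ← mul_assoc, ← mul_assoc, hat, hbt, mul_add, mul_assoc]

theorem RightOreCondition.smul {R : Type*} [CommSemiring R] [Algebra R T]
    {a : T} (ha : RightOreCondition ι S₀ a) (r : R) : RightOreCondition ι S₀ (r • a) := by
  intro s hs
  obtain ⟨a', t, ht, hat⟩ := ha s hs
  exact ⟨r • a', t, ht, by rw [smul_mul_assoc, hat, mul_smul_comm]⟩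

theorem RightOreCondition.mul_left {u v : T} (huv : u * v = 1)
    (hconj : ∀ s ∈ S₀, ∃ s' ∈ S₀, ι s' = v * ι s * u)
    {a : T} (ha : RightOreCondition ι S₀ a) : RightOreCondition ι S₀ (u * a) := by
  intro s hs
  obtain ⟨s', hs', hs's⟩ := hconj s hs
  obtain ⟨a', t, ht, hat⟩ := ha s' hs'
  refine ⟨u * a', t, ht, ?_⟩
  rw [mul_assoc, hat, hs's, ← mul_assoc, ← mul_assoc, ← mul_assoc, huv, one_mul, mul_assoc]

end RightOreCondition

theorem right_divisor_set_of_group_invariant_general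
    (R : Type*) [CommRing R] (G : Type*) [Group G] (A : Subgroup G)
    (ι : MonoidAlgebra R A →+* MonoidAlgebra R G)
    (hι : ι = MonoidAlgebra.mapDomainRingHom R A.subtype)
    (S₀ : Set (MonoidAlgebra R A))
    (hmul : ∀ s ∈ S₀, ∀ t ∈ S₀, s * t ∈ S₀)
    (h0 : (0 : MonoidAlgebra R A) ∉ S₀)
    (hdiv : ∀ a : MonoidAlgebra R A, ∀ s ∈ S₀,
      ∃ a' : MonoidAlgebra R A, ∃ s' ∈ S₀, a * s' = s * a')
    (hinv : ∀ g : G,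
      (fun x => (MonoidAlgebra.of R G g⁻¹) * x * (MonoidAlgebra.of R G g)) '' (ι '' S₀)
        = ι '' S₀) :
    (0 : MonoidAlgebra R G) ∉ ι '' S₀ ∧
      ∀ a : MonoidAlgebra R G, ∀ s ∈ S₀,
        ∃ a' : MonoidAlgebra R G, ∃ s' ∈ S₀, a * ι s' = ι s * a' := by
  have hinj : Function.Injective ι := hι ▸ mapDomain_injective A.subtype_injective
  refine ⟨fun ⟨s, hs, hs0⟩ => h0 (hinj (hs0.trans (map_zero ι).symm) ▸ hs), fun a => ?_⟩
  have hconj (g : G) (s) (hs : s ∈ S₀) : ∃ s' ∈ S₀, ι s' = of R G g⁻¹ * ι s * of R G g :=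
    (hinv g ▸ Set.mem_image_of_mem _ (Set.mem_image_of_mem ι hs) :)
  have hgg (g : G) : of R G g * of R G g⁻¹ = 1 := by rw [← map_mul, mul_inv_cancel, map_one]
  show RightOreCondition ι S₀ a
  induction a using MonoidAlgebra.induction_on with
  | of g => simpa only [mul_one] using rightOreCondition_one.mul_left (hgg g) (hconj g)
  | add a b ha hb => exact ha.add hmul hdiv hb
  | smul r a ha => exact ha.smul r

/-- Proposition 4.1 of Cochran–Harvey–Leidy: if `A` is a normal subgroup of `G` such that
`R[A]` is a domain, and `S₀ ⊆ R[A]` is a multiplicatively closed, `G`-invariant right divisor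
set of `R[A]` not containing `0`, then (the image of) `S₀` is a right divisor set of `R[G]`. -/
theorem right_divisor_set_of_group_invariant
    (R : Type*) [CommRing R] (G : Type*) [Group G] (A : Subgroup G) (hA : A.Normal)
    (hdom : IsDomain (MonoidAlgebra R A))
    (ι : MonoidAlgebra R A →+* MonoidAlgebra R G)
    (hι : ι = MonoidAlgebra.mapDomainRingHom R A.subtype)
    (S₀ : Set (MonoidAlgebra R A))
    (hmul : ∀ s ∈ S₀, ∀ t ∈ S₀, s * t ∈ S₀)
    (h0 : (0 : MonoidAlgebra R A) ∉ S₀)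
    (hdiv : ∀ a : MonoidAlgebra R A, ∀ s ∈ S₀,
      ∃ a' : MonoidAlgebra R A, ∃ s' ∈ S₀, a * s' = s * a')
    (hinv : ∀ g : G,
      (fun x => (MonoidAlgebra.of R G g⁻¹) * x * (MonoidAlgebra.of R G g)) '' (ι '' S₀)
        = ι '' S₀) :
    (0 : MonoidAlgebra R G) ∉ ι '' S₀ ∧
      ∀ a : MonoidAlgebra R G, ∀ s ∈ S₀,
        ∃ a' : MonoidAlgebra R G, ∃ s' ∈ S₀, a * ι s' = ι s * a' :=
  right_divisor_set_of_group_invariant_general R G A ι hι S₀ hmul h0 hdiv hinv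
end

section
/- Let p be a nonzero Laurent polynomial over ℂ, let τ be a nonzero complex number, let r ≥ 2, let m ∈ ℤ, and let n₂, …, n_r be integers that are not all zero. Let Φ : ℂ[t^{±1}] → ℂ[x₁^{±1}, …, x_r^{±1}] be the ℂ-algebra homomorphism sending t to the monomial x₁^m x₂^{n₂} ⋯ x_r^{n_r} (the homomorphism of group algebras induced by the group homomorphism ℤ → ℤ^r, 1 ↦ (m, n₂, …, n_r)). Then x₁ − τ does not divide Φ(p) in ℂ[x₁^{±1}, …, x_r^{±1}]. -/
/-!
Specialise `x₁ ↦ τ`, `xᵢ ↦ t` for an index `i ≠ 1` with `vᵢ ≠ 0`, and every other variable to `1`.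
This `ℂ`-algebra map kills `x₁ - τ`, whereas its composite with `Φ` sends `t` to `τ^{v₁} t^{vᵢ}`,
which is injective on `ℂ[t^{±1}]` because the exponent map `n ↦ n vᵢ` is injective and the twisting
factors `τ^{n v₁}` are units.
-/

namespace AddMonoidAlgebra

variable {k G H K : Type*} [CommSemiring k] [AddMonoid G] [AddMonoid H] [AddMonoid K]

noncomputable def twistedMapDomain (f : G →+ H) (χ : Multiplicative G →* kˣ) : k[G] →ₐ[k] k[H] :=
  lift k k[H] G
    { toFun g := single (f g.toAdd) (χ g : k)
      map_one' := by simp [one_def]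
      map_mul' a b := by simp [single_mul_single] }

@[simp]
lemma twistedMapDomain_single (f : G →+ H) (χ : Multiplicative G →* kˣ) (g : G) (a : k) :
    twistedMapDomain f χ (single g a) = single (f g) (a * χ (.ofAdd g)) := by
  simp [twistedMapDomain]

lemma twistedMapDomain_comp_mapDomainAlgHom (f : G →+ H) (χ : Multiplicative G →* kˣ)
    (e : K →+ G) :
    (twistedMapDomain f χ).comp (mapDomainAlgHom k k e) =
      twistedMapDomain (f.comp e) (χ.comp e.toMultiplicative) := by
  ext g
  simp

lemma coeff_twistedMapDomain_apply {f : G →+ H} (hf : Function.Injective f)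
    (χ : Multiplicative G →* kˣ) (x : k[G]) (g : G) :
    (twistedMapDomain f χ x).coeff (f g) = x.coeff g * χ (.ofAdd g) := by
  induction x using induction_linear with
  | zero => simp
  | add x y hx hy => simp [coeff_add, hx, hy, add_mul]
  | single g' a =>
    by_cases h : g' = g
    · subst h; simp [coeff_single]
    · simp [coeff_single, h, hf.ne h]

lemma twistedMapDomain_injective {f : G →+ H} (hf : Function.Injective f)
    (χ : Multiplicative G →* kˣ) : Function.Injective (twistedMapDomain f χ) := by
  intro x y hxy
  ext g
  have hcoeff := congr_arg (fun z => z.coeff (f g)) hxy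
  simpa only [coeff_twistedMapDomain_apply hf, Units.mul_left_inj] using hcoeff

end AddMonoidAlgebra

open AddMonoidAlgebra

/-- Let `p` be a nonzero Laurent polynomial over `ℂ`, `τ ≠ 0`, `r ≥ 2`, and let
`Φ : ℂ[t^{±1}] → ℂ[x₁^{±1},…,x_r^{±1}]` be induced by `t ↦ x₁^{v 0} x₂^{v 1} ⋯ x_r^{v (r-1)}`
(i.e. by the group homomorphism `ℤ → ℤ^r`, `1 ↦ v`), where the components of `v` other
than the first are not all zero.  Then `x₁ − τ` does not divide `Φ(p)`. -/
theorem x_sub_tau_not_dvd (r : ℕ) (hr : 2 ≤ r) (τ : ℂ) (hτ : τ ≠ 0)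
    (p : AddMonoidAlgebra ℂ ℤ) (hp : p ≠ 0)
    (v : Fin r → ℤ) (hv : ∃ i : Fin r, i ≠ ⟨0, by omega⟩ ∧ v i ≠ 0) :
    ¬ ((AddMonoidAlgebra.single (Pi.single (⟨0, by omega⟩ : Fin r) (1 : ℤ)) (1 : ℂ)
          - AddMonoidAlgebra.single 0 τ)
        ∣ AddMonoidAlgebra.mapDomainRingHom ℂ (zmultiplesHom (Fin r → ℤ) v) p) := by
  obtain ⟨i, hi, hvi⟩ := hv
  rintro ⟨q, hq⟩
  let E : AddMonoidAlgebra ℂ (Fin r → ℤ) →ₐ[ℂ] AddMonoidAlgebra ℂ ℤ :=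
    twistedMapDomain (Pi.evalAddMonoidHom (fun _ => ℤ) i)
      ((zpowersHom ℂˣ (Units.mk0 τ hτ)).comp
        (Pi.evalAddMonoidHom (fun _ => ℤ) ⟨0, by omega⟩).toMultiplicative)
  have hE : E (single (Pi.single ⟨0, by omega⟩ 1) 1 - single 0 τ) = 0 := by
    simp [E, Pi.single_eq_of_ne hi]
  have hinj : Function.Injective (E.comp (mapDomainAlgHom ℂ ℂ (zmultiplesHom _ v))) := by
    rw [twistedMapDomain_comp_mapDomainAlgHom]
    exact twistedMapDomain_injective (smul_left_injective ℤ hvi) _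
  have hEΦp : E (mapDomainRingHom ℂ (zmultiplesHom _ v) p) = 0 := by
    rw [hq, map_mul, hE, zero_mul]
  exact hp (hinj (by rw [map_zero]; exact hEΦp))
end

section
/- Let p(t) and q(t) be nonzero Laurent polynomials over ℚ. Then p and q are strongly coprime if and only if for every r ≥ 1 and every pair of nontrivial elements a, b of the free abelian group ℤ^r (written multiplicatively), the elements p(a) and q(b) are relatively prime in the group algebra ℚ[ℤ^r], i.e., every common divisor of p(a) and q(b) in ℚ[ℤ^r] is a unit. -/
/-!
If `ψ` maps into a group with two unique sums and is constant on the support of `f * g`, it is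
constant on the support of `f`: otherwise two distinct unique-sum pairs of `ψ`-values survive in
the product. Given nonzero `a, b ∈ ℤ^r`, pick `φ : ℤ^r →+ ℤ` with `φ a ≠ 0 ≠ φ b` and apply this
to `ψ w = φ(a) w - φ(w) a`, which kills `a`: then `φ` is injective on the support of any divisor
of `p(a)`. Pushing a common divisor `d` of `p(a)` and `q(b)` forward along `φ` gives a common
divisor of `p(t^{φ a})` and `q(t^{φ b})`, that is, a unit of `ℚ[t^{±1}]`, which is a monomial;
hence so is `d`. The converse is the case `r = 1`.
-/

namespace AddMonoidAlgebra

section UniqueSums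

variable {R G H : Type*} [Semiring R] [NoZeroDivisors R] [Add G] [UniqueSums G] [Add H]

theorem exists_mem_support_mul_of_uniqueAdd_image [DecidableEq H] (ψ : G →ₙ+ H) {f g : R[G]}
    {a b : H} (ha : a ∈ f.coeff.support.image ψ) (hb : b ∈ g.coeff.support.image ψ)
    (hab : UniqueAdd (f.coeff.support.image ψ) (g.coeff.support.image ψ) a b) :
    ∃ z ∈ (f * g).coeff.support, ψ z = a + b := by
  obtain ⟨x, hx, y, hy, hxy⟩ := UniqueSums.uniqueAdd_of_nonempty
    (Finset.filter_nonempty_iff.2 (Finset.mem_image.1 ha))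
    (Finset.filter_nonempty_iff.2 (Finset.mem_image.1 hb))
  rw [Finset.mem_filter] at hx hy
  refine ⟨x + y, ?_, by rw [map_add, hx.2, hy.2]⟩
  rw [Finsupp.mem_support_iff, coeff_mul_add_of_uniqueAdd (hab.of_image_filter ψ hx.2 hy.2 hxy)]
  exact mul_ne_zero (Finsupp.mem_support_iff.1 hx.1) (Finsupp.mem_support_iff.1 hy.1)

theorem image_support_subsingleton_of_mul [TwoUniqueSums H] (ψ : G →ₙ+ H) {f g : R[G]}
    (hg : g ≠ 0) (h : (ψ '' (f * g).coeff.support).Subsingleton) :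
    (ψ '' f.coeff.support).Subsingleton := by
  classical
  by_contra hf
  set A := f.coeff.support.image ψ
  set B := g.coeff.support.image ψ
  have hA : 1 < A.card := by
    rw [Finset.one_lt_card_iff_nontrivial, ← Finset.nontrivial_coe, Finset.coe_image]
    exact Set.not_subsingleton_iff.1 hf
  have hB : 0 < B.card :=
    (Finsupp.support_nonempty_iff.2 (mt coeff_eq_zero.1 hg)).image ψ |>.card_pos
  obtain ⟨p₁, hp₁, p₂, hp₂, hne, hu₁, hu₂⟩ :=
    TwoUniqueSums.uniqueAdd_of_one_lt_card (lt_mul_of_lt_of_one_le hA hB)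
  rw [Finset.mem_product] at hp₁ hp₂
  obtain ⟨z₁, hz₁, hψz₁⟩ := exists_mem_support_mul_of_uniqueAdd_image ψ hp₁.1 hp₁.2 hu₁
  obtain ⟨z₂, hz₂, hψz₂⟩ := exists_mem_support_mul_of_uniqueAdd_image ψ hp₂.1 hp₂.2 hu₂
  have hsum : p₂.1 + p₂.2 = p₁.1 + p₁.2 := by
    rw [← hψz₁, ← hψz₂]
    exact h ⟨z₂, hz₂, rfl⟩ ⟨z₁, hz₁, rfl⟩
  obtain ⟨h₁, h₂⟩ := hu₁ hp₂.1 hp₂.2 hsum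
  exact hne (Prod.ext h₁.symm h₂.symm)

end UniqueSums

theorem support_subsingleton_of_isUnit {R H : Type*} [Semiring R] [NoZeroDivisors R]
    [AddMonoid H] [TwoUniqueSums H] {u : R[H]} (hu : IsUnit u) :
    (u.coeff.support : Set H).Subsingleton := by
  obtain ⟨v, huv⟩ := hu.exists_right_inv
  rcases eq_or_ne v 0 with rfl | hv
  · have : Subsingleton R[H] := subsingleton_of_zero_eq_one (by simpa using huv)
    simp [Subsingleton.elim u 0]
  · simpa using image_support_subsingleton_of_mul (AddHom.id H) hv (by
      rw [huv, one_def, coeff_single]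
      exact (Set.subsingleton_of_subset_singleton (mod_cast Finsupp.support_single_subset)).image _)

theorem isUnit_of_injOn_of_isUnit_mapDomainRingHom {k G H : Type*} [Field k] [AddGroup G]
    [AddMonoid H] [TwoUniqueSums H] (φ : G →+ H) {d : k[G]} (hφ : Set.InjOn φ d.coeff.support)
    (hd : IsUnit (mapDomainRingHom k φ d)) : IsUnit d := by
  classical
  have hsupp := support_subsingleton_of_isUnit hd
  rw [mapDomainRingHom_apply, coeff_mapDomain, Finsupp.mapDomain_support_of_injOn _ hφ,
    Finset.coe_image] at hsupp
  obtain ⟨x, hx⟩ : d.coeff.support.Nonempty :=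
    Finsupp.support_nonempty_iff.2 (mt coeff_eq_zero.1 (by rintro rfl; simp at hd))
  have hsub : d.coeff.support ⊆ {x} := fun y hy ↦
    Finset.mem_singleton.2 (hφ hy hx (hsupp ⟨y, hy, rfl⟩ ⟨x, hx, rfl⟩))
  have hd_single : d = single x (d.coeff x) :=
    coeff_injective (by rw [coeff_single]; exact Finsupp.support_subset_singleton.1 hsub)
  have hc : d.coeff x ≠ 0 := Finsupp.mem_support_iff.1 hx
  rw [hd_single]
  exact ⟨⟨_, single (-x) (d.coeff x)⁻¹, by simp [single_mul_single, hc, one_def],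
    by simp [single_mul_single, hc, one_def]⟩, rfl⟩

theorem mapDomainRingHom_dvd_zmultiplesHom {R G H : Type*} [Semiring R] [AddGroup G] [AddGroup H]
    (φ : G →+ H) {a : G} {p : R[ℤ]} {d : R[G]}
    (hd : d ∣ mapDomainRingHom R (zmultiplesHom G a) p) :
    mapDomainRingHom R φ d ∣ mapDomainRingHom R (zmultiplesHom H (φ a)) p := by
  have hcomp : φ.comp (zmultiplesHom G a) = zmultiplesHom H (φ a) := by ext; simp
  simpa [← hcomp, mapDomainRingHom_comp] using map_dvd (mapDomainRingHom R φ) hd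

theorem injOn_support_of_dvd_mapDomainRingHom_zmultiplesHom {R G : Type*} [Semiring R]
    [NoZeroDivisors R] [AddCommGroup G] [TwoUniqueSums G] [IsAddTorsionFree G] (φ : G →+ ℤ)
    {a : G} (ha : φ a ≠ 0) {p : R[ℤ]} (hp : p ≠ 0) {d : R[G]}
    (hd : d ∣ mapDomainRingHom R (zmultiplesHom G a) p) : Set.InjOn φ d.coeff.support := by
  classical
  obtain ⟨e, he⟩ := hd
  have hinj : Function.Injective (zmultiplesHom G a) := fun k l hkl ↦
    mul_right_cancel₀ ha (by simpa using congrArg φ hkl)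
  have he0 : e ≠ 0 := by
    rintro rfl
    exact hp (mapDomain_injective (R := R) hinj (by simpa using he))
  let ψ : G →+ G := φ a • AddMonoidHom.id G - (zmultiplesHom G a).comp φ
  have hψ : (ψ '' (d * e).coeff.support).Subsingleton := by
    refine Set.subsingleton_of_subset_singleton (a := 0) ?_
    rintro _ ⟨z, hz, rfl⟩
    rw [← he, mapDomainRingHom_apply, coeff_mapDomain] at hz
    obtain ⟨k, -, rfl⟩ := Finset.mem_image.1 (Finsupp.mapDomain_support hz)
    simp [ψ, smul_smul, mul_comm]
  intro x hx y hy hxy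
  have := image_support_subsingleton_of_mul ψ.toAddHom he0 hψ ⟨x, hx, rfl⟩ ⟨y, hy, rfl⟩
  simp [ψ, hxy] at this
  exact zsmul_right_injective ha this

end AddMonoidAlgebra

theorem Pi.exists_addMonoidHom_apply_ne_zero {ι : Type*} {a b : ι → ℤ} (ha : a ≠ 0)
    (hb : b ≠ 0) : ∃ φ : (ι → ℤ) →+ ℤ, φ a ≠ 0 ∧ φ b ≠ 0 := by
  obtain ⟨i, hi : a i ≠ 0⟩ := Function.ne_iff.1 ha
  obtain ⟨j, hj : b j ≠ 0⟩ := Function.ne_iff.1 hb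
  by_cases hbi : b i = 0
  · by_cases haj : a j = 0
    · exact ⟨Pi.evalAddMonoidHom (fun _ : ι ↦ ℤ) i + Pi.evalAddMonoidHom (fun _ : ι ↦ ℤ) j,
        by simp [haj, hi], by simp [hbi, hj]⟩
    · exact ⟨Pi.evalAddMonoidHom (fun _ : ι ↦ ℤ) j, haj, hj⟩
  · exact ⟨Pi.evalAddMonoidHom (fun _ : ι ↦ ℤ) i, hi, hbi⟩

open AddMonoidAlgebra

theorem strongly_coprime_iff_relPrime_in_free_abelian_general
    (p q : AddMonoidAlgebra ℚ ℤ) (hp : p ≠ 0) :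
    (∀ m n : ℤ, m ≠ 0 → n ≠ 0 →
      ∀ d : AddMonoidAlgebra ℚ ℤ,
        d ∣ AddMonoidAlgebra.mapDomainRingHom ℚ (zmultiplesHom ℤ m) p →
        d ∣ AddMonoidAlgebra.mapDomainRingHom ℚ (zmultiplesHom ℤ n) q →
        IsUnit d) ↔
    (∀ r : ℕ, 1 ≤ r → ∀ a b : Fin r → ℤ, a ≠ 0 → b ≠ 0 →
      ∀ d : AddMonoidAlgebra ℚ (Fin r → ℤ),
        d ∣ AddMonoidAlgebra.mapDomainRingHom ℚ (zmultiplesHom (Fin r → ℤ) a) p →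
        d ∣ AddMonoidAlgebra.mapDomainRingHom ℚ (zmultiplesHom (Fin r → ℤ) b) q →
        IsUnit d) := by
  constructor
  · intro H r _ a b ha hb d hda hdb
    obtain ⟨φ, hφa, hφb⟩ := Pi.exists_addMonoidHom_apply_ne_zero ha hb
    exact isUnit_of_injOn_of_isUnit_mapDomainRingHom φ
      (injOn_support_of_dvd_mapDomainRingHom_zmultiplesHom φ hφa hp hda)
      (H _ _ hφa hφb _ (mapDomainRingHom_dvd_zmultiplesHom φ hda)
        (mapDomainRingHom_dvd_zmultiplesHom φ hdb))
  · intro H m n hm hn d hdm hdn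
    let ι : ℤ ≃+ (Fin 1 → ℤ) := (AddEquiv.funUnique (Fin 1) ℤ).symm
    exact isUnit_of_injOn_of_isUnit_mapDomainRingHom ι.toAddMonoidHom ι.injective.injOn
      (H 1 le_rfl (ι m) (ι n) (by simpa using hm) (by simpa using hn) _
        (mapDomainRingHom_dvd_zmultiplesHom _ hdm) (mapDomainRingHom_dvd_zmultiplesHom _ hdn))

/-- Proposition 4.5 of Cochran–Harvey–Leidy: nonzero Laurent polynomials `p`, `q` over `ℚ`
are strongly coprime (i.e. `p(t^m)` and `q(t^n)` are relatively prime in `ℚ[t^{±1}]` for all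
nonzero integers `m`, `n`) if and only if for every `r ≥ 1` and all nontrivial `a`, `b` in the
free abelian group `ℤ^r`, the elements `p(a)` and `q(b)` are relatively prime in the group
algebra `ℚ[ℤ^r]`. -/
theorem strongly_coprime_iff_relPrime_in_free_abelian
    (p q : AddMonoidAlgebra ℚ ℤ) (hp : p ≠ 0) (hq : q ≠ 0) :
    (∀ m n : ℤ, m ≠ 0 → n ≠ 0 →
      ∀ d : AddMonoidAlgebra ℚ ℤ,
        d ∣ AddMonoidAlgebra.mapDomainRingHom ℚ (zmultiplesHom ℤ m) p →
        d ∣ AddMonoidAlgebra.mapDomainRingHom ℚ (zmultiplesHom ℤ n) q →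
        IsUnit d) ↔
    (∀ r : ℕ, 1 ≤ r → ∀ a b : Fin r → ℤ, a ≠ 0 → b ≠ 0 →
      ∀ d : AddMonoidAlgebra ℚ (Fin r → ℤ),
        d ∣ AddMonoidAlgebra.mapDomainRingHom ℚ (zmultiplesHom (Fin r → ℤ) a) p →
        d ∣ AddMonoidAlgebra.mapDomainRingHom ℚ (zmultiplesHom (Fin r → ℤ) b) q →
        IsUnit d) :=
  strongly_coprime_iff_relPrime_in_free_abelian_general p q hp
end

section
/- Let R be a commutative ring and G a group such that the group ring R[G] is a domain (nonzero with no zero divisors), and let A be a subgroup of G. Suppose p and s are elements of R[G] whose supports are contained in A, that p ≠ 0, and that f ∈ R[G] satisfies s = p·f. Then the support of f is contained in A. -/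
/-!
Truncating coefficients to a subgroup `A` is a left `R[A]`-linear projection `π` of `R[G]`:
multiplying by `h ∈ A` preserves both `A` and its complement. Hence `p * f = s = π s = π (p * f)
= p * π f`, and cancelling the nonzero `p` in the domain `R[G]` gives `f = π f`.
-/

namespace MonoidAlgebra

variable {R G : Type*} [Semiring R]

def restrict (s : Set G) [DecidablePred (· ∈ s)] (x : MonoidAlgebra R G) : MonoidAlgebra R G :=
  ofCoeff (x.coeff.filter (· ∈ s))

section restrict

variable (s : Set G) [DecidablePred (· ∈ s)]

lemma coeff_restrict (x : MonoidAlgebra R G) (g : G) :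
    (restrict s x).coeff g = if g ∈ s then x.coeff g else 0 :=
  rfl

lemma support_restrict_subset (x : MonoidAlgebra R G) :
    ((restrict s x).coeff.support : Set G) ⊆ s := by
  intro g hg
  simp_all [restrict, Finsupp.support_filter]

lemma restrict_eq_self {x : MonoidAlgebra R G} (hx : (x.coeff.support : Set G) ⊆ s) :
    restrict s x = x :=
  coeff_injective <|
    (Finsupp.filter_eq_self_iff _ _).2 fun _ hg ↦ hx (Finsupp.mem_support_iff.2 hg)

end restrict

lemma restrict_mul_of_support_subset [Group G] (A : Subgroup G) [DecidablePred (· ∈ (A : Set G))]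
    {x : MonoidAlgebra R G} (hx : (x.coeff.support : Set G) ⊆ A) (y : MonoidAlgebra R G) :
    restrict A (x * y) = x * restrict A y := by
  ext g
  have hmem : ∀ h ∈ x.coeff.support, h⁻¹ * g ∈ (A : Set G) ↔ g ∈ (A : Set G) :=
    fun h hh ↦ A.mul_mem_cancel_left (A.inv_mem (hx hh))
  rw [coeff_restrict, coeff_mul_apply_left, coeff_mul_apply_left]
  split_ifs with hg
  · exact Finsupp.sum_congr fun h hh ↦ by rw [coeff_restrict, if_pos ((hmem h hh).2 hg)]
  · exact (Finset.sum_eq_zero fun h hh ↦ by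
      dsimp only
      rw [coeff_restrict, if_neg (mt (hmem h hh).1 hg), mul_zero]).symm

end MonoidAlgebra

/-- Let `R` be a commutative ring and `G` a group such that `R[G]` is a domain, and let
`A ≤ G` be a subgroup. If `p, s ∈ R[G]` have supports contained in `A`, `p ≠ 0`, and
`s = p·f`, then the support of `f` is contained in `A`. -/
theorem support_of_factor_in_subgroup
    (R : Type*) [CommRing R] (G : Type*) [Group G]
    (hdom : IsDomain (MonoidAlgebra R G)) (A : Subgroup G)
    (p s f : MonoidAlgebra R G)
    (hps : (p.coeff.support : Set G) ⊆ (A : Set G))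
    (hss : (s.coeff.support : Set G) ⊆ (A : Set G))
    (hp : p ≠ 0) (h : s = p * f) :
    (f.coeff.support : Set G) ⊆ (A : Set G) := by
  classical
  have hf : MonoidAlgebra.restrict A f = f :=
    hdom.mul_left_cancel_of_ne_zero hp <| show p * _ = p * f by
      rw [← MonoidAlgebra.restrict_mul_of_support_subset A hps, ← h,
        MonoidAlgebra.restrict_eq_self _ hss]
  exact hf ▸ MonoidAlgebra.support_restrict_subset _ _
end
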